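/- Let p ≥ 1, let P(y) = y^p + Σ_{0≤h≤p−1} c_h·y^h ∈ ℝ[y] be monic of degree p, let 0 ≤ q ≤ p−1 and let t₁, t₂ ∈ ℝ. For i = 1,2 define η_i : {0,…,p} → {−1,0,1} by η_i(k) = sign(P^{(k)}(t_i)) for 0 ≤ k ≤ p−1 and η_i(p) = 1. Suppose η₁(q) ≠ η₂(q), suppose η₁(k) = η₂(k) ≠ 0 for all q+1 ≤ k ≤ p−1, and suppose that either η₁(q) < η₂(q) and η₁(q+1) = 1, or η₁(q) > η₂(q) and η₁(q+1) = −1. Then t₁ < t₂. -/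

import Mathlib

/-!
Suppose `t₂ ≤ t₁`. Going down from the constant derivative `P^{(p)}`, each `P^{(k)}` with
`q + 1 ≤ k` has constant sign on `[t₂, t₁]`: its derivative does, so it is monotone there,
and a monotone function whose values at both ends have the same sign keeps that sign in
between. Hence `P^{(q)}` is monotone on `[t₂, t₁]`, increasing if `η₁ (q + 1) = 1` and
decreasing if `η₁ (q + 1) = -1`, and in either case the order of `η₁ q` and `η₂ q` is the
opposite of the one assumed.
-/

open Polynomial Set

lemma sign_eq_of_monotoneOn_or_antitoneOn {α β : Type*} [Preorder α] [Zero β] [Preorder β]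
    [DecidableLT β] {g : α → β} {a b x : α}
    (hg : MonotoneOn g (Icc a b) ∨ AntitoneOn g (Icc a b))
    (hends : SignType.sign (g a) = SignType.sign (g b)) (hx : x ∈ Icc a b) :
    SignType.sign (g x) = SignType.sign (g b) := by
  have ha : a ∈ Icc a b := left_mem_Icc.2 (hx.1.trans hx.2)
  have hb : b ∈ Icc a b := right_mem_Icc.2 (hx.1.trans hx.2)
  rcases hg with hg | hg
  · exact le_antisymm (SignType.sign.monotone (hg hx hb hx.2))
      (hends ▸ SignType.sign.monotone (hg ha hx hx.1))
  · exact le_antisymm (hends ▸ SignType.sign.monotone (hg ha hx hx.1))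
      (SignType.sign.monotone (hg hx hb hx.2))

namespace Polynomial

lemma iterate_derivative_natDegree {R : Type*} [Semiring R] (P : R[X]) :
    derivative^[P.natDegree] P = C ((P.natDegree.factorial : R) * P.leadingCoeff) := by
  have hdeg : (derivative^[P.natDegree] P).natDegree ≤ 0 := by
    simpa using natDegree_iterate_derivative P P.natDegree
  rw [eq_C_of_natDegree_le_zero hdeg,
    coeff_iterate_derivative, zero_add, Nat.descFactorial_self, nsmul_eq_mul, leadingCoeff]

lemma Monic.sign_eval_iterate_derivative_natDegree {P : ℝ[X]} (hP : P.Monic) (x : ℝ) :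
    SignType.sign ((derivative^[P.natDegree] P).eval x) = 1 := by
  rw [iterate_derivative_natDegree, eval_C, hP.leadingCoeff, mul_one]
  exact sign_pos (by positivity)

lemma eval_iterate_derivative_eq_of_natDegree_le {R : Type*} [CommSemiring R] {P : R[X]}
    {k : ℕ} (hk : P.natDegree ≤ k) (x y : R) :
    (derivative^[k] P).eval x = (derivative^[k] P).eval y := by
  have hdeg : (derivative^[k] P).natDegree ≤ 0 :=
    (natDegree_iterate_derivative P k).trans (Nat.sub_eq_zero_of_le hk).le
  rw [eq_C_of_natDegree_le_zero hdeg, eval_C, eval_C]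

lemma monotoneOn_eval_of_derivative_nonneg {f : ℝ[X]} {s : Set ℝ} (hs : Convex ℝ s)
    (hf : ∀ x ∈ s, 0 ≤ (derivative f).eval x) : MonotoneOn (fun x ↦ f.eval x) s :=
  monotoneOn_of_deriv_nonneg hs f.continuousOn f.differentiableOn fun x hx ↦ by
    simpa only [Polynomial.deriv] using hf x (interior_subset hx)

lemma antitoneOn_eval_of_derivative_nonpos {f : ℝ[X]} {s : Set ℝ} (hs : Convex ℝ s)
    (hf : ∀ x ∈ s, (derivative f).eval x ≤ 0) : AntitoneOn (fun x ↦ f.eval x) s :=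
  antitoneOn_of_deriv_nonpos hs f.continuousOn f.differentiableOn fun x hx ↦ by
    simpa only [Polynomial.deriv] using hf x (interior_subset hx)

lemma monotoneOn_or_antitoneOn_eval_of_sign_derivative_eq {f : ℝ[X]} {s : Set ℝ}
    (hs : Convex ℝ s) {σ : SignType}
    (hf : ∀ x ∈ s, SignType.sign ((derivative f).eval x) = σ) :
    MonotoneOn (fun x ↦ f.eval x) s ∨ AntitoneOn (fun x ↦ f.eval x) s := by
  rcases le_total 0 σ with hσ | hσ
  · exact .inl <| monotoneOn_eval_of_derivative_nonneg hs fun x hx ↦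
      sign_nonneg_iff.1 (hf x hx ▸ hσ)
  · exact .inr <| antitoneOn_eval_of_derivative_nonpos hs fun x hx ↦
      sign_nonpos_iff.1 (hf x hx ▸ hσ)

lemma sign_eval_iterate_derivative_eq_on_Icc (P : ℝ[X]) {a b : ℝ} {m : ℕ}
    (hends : ∀ k, m ≤ k → k < P.natDegree →
      SignType.sign ((derivative^[k] P).eval a) = SignType.sign ((derivative^[k] P).eval b))
    {k : ℕ} (hmk : m ≤ k) :
    ∀ x ∈ Icc a b,
      SignType.sign ((derivative^[k] P).eval x) = SignType.sign ((derivative^[k] P).eval b) := by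
  induction hj : P.natDegree - k generalizing k with
  | zero =>
    intro x _
    rw [eval_iterate_derivative_eq_of_natDegree_le (by omega) x b]
  | succ j ih =>
    have hderiv := ih (k := k + 1) (by omega) (by omega)
    rw [Function.iterate_succ_apply'] at hderiv
    exact fun x ↦ sign_eq_of_monotoneOn_or_antitoneOn
      (monotoneOn_or_antitoneOn_eval_of_sign_derivative_eq (convex_Icc a b) hderiv)
      (hends k hmk (by omega))

end Polynomial

theorem thom_encoding_lt_general (p : ℕ) (hp : 1 ≤ p) (P : Polynomial ℝ)
    (hmon : P.Monic) (hdeg : P.natDegree = p)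
    (q : ℕ) (hq : q ≤ p - 1) (t₁ t₂ : ℝ)
    (η₁ η₂ : ℕ → SignType)
    (hη₁ : ∀ k ≤ p, η₁ k =
      if k = p then 1
      else SignType.sign ((Polynomial.derivative^[k] P).eval t₁))
    (hη₂ : ∀ k ≤ p, η₂ k =
      if k = p then 1
      else SignType.sign ((Polynomial.derivative^[k] P).eval t₂))
    (hsame : ∀ k, q + 1 ≤ k → k ≤ p - 1 → η₁ k = η₂ k ∧ η₁ k ≠ 0)
    (hcase : (η₁ q < η₂ q ∧ η₁ (q + 1) = 1) ∨ (η₂ q < η₁ q ∧ η₁ (q + 1) = -1)) :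
    t₁ < t₂ := by
  subst hdeg
  have hsign (t : ℝ) (k : ℕ) :
      (if k = P.natDegree then 1 else SignType.sign ((derivative^[k] P).eval t)) =
        SignType.sign ((derivative^[k] P).eval t) := by
    split_ifs with hk
    · rw [hk, hmon.sign_eval_iterate_derivative_natDegree]
    · rfl
  have hη₁' k (hk : k ≤ P.natDegree) := (hη₁ k hk).trans (hsign t₁ k)
  have hη₂' k (hk : k ≤ P.natDegree) := (hη₂ k hk).trans (hsign t₂ k)
  by_contra! h21
  have hq1 : ∀ x ∈ Icc t₂ t₁,
      SignType.sign ((derivative (derivative^[q] P)).eval x) = η₁ (q + 1) := by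
    intro x hx
    rw [← Function.iterate_succ_apply' derivative, hη₁' (q + 1) (by omega)]
    refine P.sign_eval_iterate_derivative_eq_on_Icc (fun k hqk hkp ↦ ?_) le_rfl x hx
    rw [← hη₁' k hkp.le, ← hη₂' k hkp.le, (hsame k hqk (by omega)).1]
  have ht₂ : t₂ ∈ Icc t₂ t₁ := left_mem_Icc.2 h21
  have ht₁ : t₁ ∈ Icc t₂ t₁ := right_mem_Icc.2 h21
  rw [hη₁' q (by omega), hη₂' q (by omega)] at hcase
  rcases hcase with ⟨hlt, hpos⟩ | ⟨hlt, hneg⟩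
  · have hmono := monotoneOn_eval_of_derivative_nonneg (convex_Icc t₂ t₁)
      fun x hx ↦ sign_nonneg_iff.1 (by rw [hq1 x hx, hpos]; decide)
    exact hlt.not_ge (SignType.sign.monotone (hmono ht₂ ht₁ h21))
  · have hanti := antitoneOn_eval_of_derivative_nonpos (convex_Icc t₂ t₁)
      fun x hx ↦ sign_nonpos_iff.1 (by rw [hq1 x hx, hneg]; decide)
    exact hlt.not_ge (SignType.sign.monotone (hanti ht₂ ht₁ h21))

/-- Semantic content of Proposition `thWITL_lower`: let `P` be monic of degree
`p ≥ 1` and let `η₁, η₂` be the extended Thom encodings of `t₁, t₂`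
(with `η_i k = sign (P^{(k)}(t_i))` for `k ≤ p-1` and `η_i p = 1`). If
`η₁ q ≠ η₂ q`, `η₁ k = η₂ k ≠ 0` for all `q+1 ≤ k ≤ p-1`, and either
`η₁ q < η₂ q` with `η₁ (q+1) = 1`, or `η₁ q > η₂ q` with `η₁ (q+1) = -1`,
then `t₁ < t₂`. -/
theorem thom_encoding_lt (p : ℕ) (hp : 1 ≤ p) (P : Polynomial ℝ)
    (hmon : P.Monic) (hdeg : P.natDegree = p)
    (q : ℕ) (hq : q ≤ p - 1) (t₁ t₂ : ℝ)
    (η₁ η₂ : ℕ → SignType)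
    (hη₁ : ∀ k ≤ p, η₁ k =
      if k = p then 1
      else SignType.sign ((Polynomial.derivative^[k] P).eval t₁))
    (hη₂ : ∀ k ≤ p, η₂ k =
      if k = p then 1
      else SignType.sign ((Polynomial.derivative^[k] P).eval t₂))
    (hne : η₁ q ≠ η₂ q)
    (hsame : ∀ k, q + 1 ≤ k → k ≤ p - 1 → η₁ k = η₂ k ∧ η₁ k ≠ 0)
    (hcase : (η₁ q < η₂ q ∧ η₁ (q + 1) = 1) ∨ (η₂ q < η₁ q ∧ η₁ (q + 1) = -1)) :
    t₁ < t₂ :=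
  thom_encoding_lt_general p hp P hmon hdeg q hq t₁ t₂ η₁ η₂ hη₁ hη₂ hsame hcase
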